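/- Let M ≥ 0, let x, y ∈ ℝ², and let u, v ∈ ℝ² satisfy ‖u‖ ≤ M and ‖v‖ ≤ M. Suppose that ‖(x + t·u) − (y + t·v)‖ ≥ 1 for every t ∈ ℝ. Then for all s, t ∈ ℝ, the Euclidean distance in ℝ³ = ℝ² × ℝ between the points (x + t·u, t) and (y + s·v, s) is at least 1/√(1 + M²). In particular, the worldlines L_x = {(x + t·u, t) : t ∈ ℝ} and L_y = {(y + s·v, s) : s ∈ ℝ} have Euclidean distance at least 1/√(1 + M²). -/

import Mathlib

/-- Space-time `ℝ³ = ℝ² × ℝ`, with the Euclidean norm `‖(p, t)‖ = √(‖p‖² + t²)`. -/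
noncomputable abbrev SpaceTime : Type :=
  WithLp 2 (EuclideanSpace ℝ (Fin 2) × ℝ)

/-- The space-time point `(p, t) ∈ ℝ² × ℝ`. -/
noncomputable def stPoint (p : EuclideanSpace ℝ (Fin 2)) (t : ℝ) : SpaceTime :=
  (WithLp.equiv 2 (EuclideanSpace ℝ (Fin 2) × ℝ)).symm (p, t)

/-- The worldline of a particle starting at `x` with velocity `u`. -/
noncomputable def worldline (x u : EuclideanSpace ℝ (Fin 2)) : Set SpaceTime :=
  {z : SpaceTime | ∃ t : ℝ, z = stPoint (x + t • u) t}

/-!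
At equal times the particles are at distance at least `1`; moving one of them along its own
worldline by a time lag `τ` changes its position by at most `M |τ|`. So the spatial gap `a` at
lag `τ` satisfies `a + M |τ| ≥ 1`, and Cauchy–Schwarz, `(a + M |τ|)² ≤ (a² + τ²)(1 + M²)`,
bounds the space-time distance `√(a² + τ²)` from below by `1 / √(1 + M²)`.
-/

lemma dist_stPoint (p q : EuclideanSpace ℝ (Fin 2)) (t s : ℝ) :
    dist (stPoint p t) (stPoint q s) = √(dist p q ^ 2 + (t - s) ^ 2) := by
  rw [WithLp.prod_dist_eq_of_L2, Real.dist_eq, sq_abs]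
  rfl

lemma norm_sub_smul_le_norm_sub_smul_add {E : Type*} [SeminormedAddCommGroup E]
    [NormedSpace ℝ E] (x y u v : E) (t s : ℝ) :
    ‖(x + t • u) - (y + t • v)‖ ≤ ‖(x + t • u) - (y + s • v)‖ + ‖v‖ * |t - s| := by
  have hshift : (x + t • u) - (y + t • v) = ((x + t • u) - (y + s • v)) - (t - s) • v := by
    module
  have := norm_sub_le ((x + t • u) - (y + s • v)) ((t - s) • v)
  rw [← hshift, norm_smul, Real.norm_eq_abs] at this
  linarith [mul_comm |t - s| ‖v‖]

lemma one_div_sqrt_one_add_sq_le_sqrt_sq_add_sq {a τ M : ℝ} (h : 1 ≤ a + M * |τ|) :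
    1 / √(1 + M ^ 2) ≤ √(a ^ 2 + τ ^ 2) := by
  have cauchySchwarz : (a + M * |τ|) ^ 2 ≤ (a ^ 2 + τ ^ 2) * (1 + M ^ 2) := by
    nlinarith [sq_nonneg (a * M - |τ|), sq_abs τ]
  have hprod : 1 ≤ (a ^ 2 + τ ^ 2) * (1 + M ^ 2) := by nlinarith
  rw [div_le_iff₀ (by positivity), ← Real.sqrt_mul (by positivity)]
  simpa using Real.sqrt_le_sqrt hprod

theorem worldlines_separated_general (M : ℝ)
    (x y u v : EuclideanSpace ℝ (Fin 2)) (hv : ‖v‖ ≤ M)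
    (hsep : ∀ t : ℝ, ‖(x + t • u) - (y + t • v)‖ ≥ 1) :
    (∀ s t : ℝ, dist (stPoint (x + t • u) t) (stPoint (y + s • v) s) ≥
        1 / Real.sqrt (1 + M ^ 2)) ∧
    ∀ p ∈ worldline x u, ∀ q ∈ worldline y v,
      dist p q ≥ 1 / Real.sqrt (1 + M ^ 2) := by
  have points : ∀ s t : ℝ, dist (stPoint (x + t • u) t) (stPoint (y + s • v) s) ≥
      1 / √(1 + M ^ 2) := by
    intro s t
    have lag := norm_sub_smul_le_norm_sub_smul_add x y u v t s
    have hvlag : ‖v‖ * |t - s| ≤ M * |t - s| := by gcongr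
    rw [dist_stPoint, dist_eq_norm]
    exact one_div_sqrt_one_add_sq_le_sqrt_sq_add_sq (by linarith [hsep t])
  refine ⟨points, ?_⟩
  rintro p ⟨t, rfl⟩ q ⟨s, rfl⟩
  exact points s t

/-- If `‖u‖, ‖v‖ ≤ M` and the moving points `x + t·u`, `y + t·v` stay at distance at
least `1` at all times, then any two points of the corresponding worldlines in
space-time are at Euclidean distance at least `1/√(1 + M²)`; in particular the
worldlines are at distance at least `1/√(1 + M²)`. -/
theorem worldlines_separated (M : ℝ) (hM : 0 ≤ M)
    (x y u v : EuclideanSpace ℝ (Fin 2)) (hu : ‖u‖ ≤ M) (hv : ‖v‖ ≤ M)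
    (hsep : ∀ t : ℝ, ‖(x + t • u) - (y + t • v)‖ ≥ 1) :
    (∀ s t : ℝ, dist (stPoint (x + t • u) t) (stPoint (y + s • v) s) ≥
        1 / Real.sqrt (1 + M ^ 2)) ∧
    ∀ p ∈ worldline x u, ∀ q ∈ worldline y v,
      dist p q ≥ 1 / Real.sqrt (1 + M ^ 2) :=
  worldlines_separated_general M x y u v hv hsep
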